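/- arXiv:2501.06373 — 2 statements merged into one kernel-verified Lean document; each statement's English description precedes it below -/
import Mathlib

section
/- Let (u, φ, ψ, w) be a classical solution of the suspension-bridge Shear beam system in thermoelasticity of type III, and define I₁(t) = ∫₀^L ( ρ u_t u + (μ/2) u² ) dx + ∫₀^L ( ρ₁ φ_t φ + (γ/2) φ² ) dx. Then for every t > 0 the exact identity holds: dI₁(t)/dt = ρ ∫₀^L u_t² dx − α ∫₀^L u_x² dx − λ ∫₀^L (φ−u)² dx + ρ₁ ∫₀^L φ_t² dx − K ∫₀^L (φ_x+ψ)² dx − b ∫₀^L ψ_x² dx + β ∫₀^L w_t φ_x dx. -/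
/-!
Differentiating under the integral sign, the integrand of `I₁'` is
`(ρ u_tt + μ u_t) u + ρ u_t² + (ρ₁ φ_tt + γ φ_t) φ + ρ₁ φ_t²`. Substituting the first two
equations of the system (multiplied by `u` and `φ`) and using the third one to trade
`K (φ_x + ψ) ψ` for `b ψ_xx ψ`, it differs from the claimed integrand by the `x`-derivative of
the flux `α u_x u + K (φ_x + ψ) φ + b ψ_x ψ - β w_t φ`, whose integral vanishes by the
Dirichlet conditions.
-/

open MeasureTheory Set

noncomputable section

/-- Partial derivative with respect to the time variable (second argument). -/
def pdt (f : ℝ → ℝ → ℝ) (x t : ℝ) : ℝ := deriv (fun s => f x s) t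

/-- Partial derivative with respect to the space variable (first argument). -/
def pdx (f : ℝ → ℝ → ℝ) (x t : ℝ) : ℝ := deriv (fun y => f y t) x

/-- A classical solution of the suspension-bridge Shear beam system in
thermoelasticity of type III. -/
structure IsShearSolution (L ρ α lm μ ρ₁ K γ b ρ₃ δ κ β : ℝ)
    (u φ ψ w : ℝ → ℝ → ℝ) : Prop where
  smooth_u : ContDiff ℝ 3 (fun p : ℝ × ℝ => u p.1 p.2)
  smooth_phi : ContDiff ℝ 3 (fun p : ℝ × ℝ => φ p.1 p.2)
  smooth_psi : ContDiff ℝ 3 (fun p : ℝ × ℝ => ψ p.1 p.2)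
  smooth_w : ContDiff ℝ 3 (fun p : ℝ × ℝ => w p.1 p.2)
  eq1 : ∀ x ∈ Ioo (0:ℝ) L, ∀ t : ℝ, 0 < t →
    ρ * pdt (pdt u) x t - α * pdx (pdx u) x t - lm * (φ x t - u x t)
      + μ * pdt u x t = 0
  eq2 : ∀ x ∈ Ioo (0:ℝ) L, ∀ t : ℝ, 0 < t →
    ρ₁ * pdt (pdt φ) x t - K * pdx (fun y s => pdx φ y s + ψ y s) x t
      + lm * (φ x t - u x t) + γ * pdt φ x t + β * pdx (pdt w) x t = 0
  eq3 : ∀ x ∈ Ioo (0:ℝ) L, ∀ t : ℝ, 0 < t →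
    -b * pdx (pdx ψ) x t + K * (pdx φ x t + ψ x t) = 0
  eq4 : ∀ x ∈ Ioo (0:ℝ) L, ∀ t : ℝ, 0 < t →
    ρ₃ * pdt (pdt w) x t - δ * pdx (pdx w) x t + β * pdx (pdt φ) x t
      - κ * pdx (pdx (pdt w)) x t = 0
  bc : ∀ t : ℝ, 0 ≤ t →
    u 0 t = 0 ∧ u L t = 0 ∧ φ 0 t = 0 ∧ φ L t = 0 ∧
    ψ 0 t = 0 ∧ ψ L t = 0 ∧ w 0 t = 0 ∧ w L t = 0

/-- The energy functional of the system. -/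
def energy (L ρ α lm ρ₁ K b ρ₃ δ : ℝ) (u φ ψ w : ℝ → ℝ → ℝ) (t : ℝ) : ℝ :=
  (1/2) * ∫ x in (0:ℝ)..L,
    (ρ * (pdt u x t)^2 + α * (pdx u x t)^2 + lm * (φ x t - u x t)^2
      + ρ₁ * (pdt φ x t)^2 + K * (pdx φ x t + ψ x t)^2 + b * (pdx ψ x t)^2
      + ρ₃ * (pdt w x t)^2 + δ * (pdx w x t)^2)

/-- The auxiliary functional I₁. -/
def I1 (L ρ μ ρ₁ γ : ℝ) (u φ : ℝ → ℝ → ℝ) (t : ℝ) : ℝ :=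
  (∫ x in (0:ℝ)..L, (ρ * pdt u x t * u x t + μ / 2 * (u x t)^2))
    + ∫ x in (0:ℝ)..L, (ρ₁ * pdt φ x t * φ x t + γ / 2 * (φ x t)^2)

/-- The auxiliary functional I₂. -/
def I2 (L ρ₃ κ β : ℝ) (φ w : ℝ → ℝ → ℝ) (t : ℝ) : ℝ :=
  ρ₃ * (∫ x in (0:ℝ)..L, pdt w x t * w x t)
    + κ / 2 * (∫ x in (0:ℝ)..L, (pdx w x t)^2)
    + β * ∫ x in (0:ℝ)..L, pdx φ x t * w x t

open Function

section PartialDerivatives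

variable {f : ℝ → ℝ → ℝ} {x t : ℝ}

theorem hasDerivAt_fderiv_apply_snd (hf : DifferentiableAt ℝ (uncurry f) (x, t)) :
    HasDerivAt (f x ·) (fderiv ℝ (uncurry f) (x, t) (0, 1)) t :=
  hf.hasFDerivAt.comp_hasDerivAt t ((hasDerivAt_const t x).prodMk (hasDerivAt_id t))

theorem hasDerivAt_fderiv_apply_fst (hf : DifferentiableAt ℝ (uncurry f) (x, t)) :
    HasDerivAt (f · t) (fderiv ℝ (uncurry f) (x, t) (1, 0)) x :=
  hf.hasFDerivAt.comp_hasDerivAt (f := fun y => (y, t)) x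
    ((hasDerivAt_id' x).prodMk (hasDerivAt_const x t))

theorem hasDerivAt_pdt (hf : DifferentiableAt ℝ (uncurry f) (x, t)) :
    HasDerivAt (f x ·) (pdt f x t) t :=
  (hasDerivAt_fderiv_apply_snd hf).differentiableAt.hasDerivAt

theorem hasDerivAt_pdx (hf : DifferentiableAt ℝ (uncurry f) (x, t)) :
    HasDerivAt (f · t) (pdx f x t) x :=
  (hasDerivAt_fderiv_apply_fst hf).differentiableAt.hasDerivAt

variable {m n : WithTop ℕ∞}

theorem ContDiff.uncurry_pdt (hf : ContDiff ℝ m (uncurry f)) (hnm : n + 1 ≤ m) :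
    ContDiff ℝ n (uncurry (pdt f)) := by
  have hdiff : Differentiable ℝ (uncurry f) := hf.differentiable (by rintro rfl; simp at hnm)
  have heq : uncurry (pdt f) = fun p => fderiv ℝ (uncurry f) p (0, 1) :=
    funext fun p => (hasDerivAt_fderiv_apply_snd (hdiff p)).deriv
  exact heq ▸ (hf.fderiv_right hnm).clm_apply contDiff_const

theorem ContDiff.uncurry_pdx (hf : ContDiff ℝ m (uncurry f)) (hnm : n + 1 ≤ m) :
    ContDiff ℝ n (uncurry (pdx f)) := by
  have hdiff : Differentiable ℝ (uncurry f) := hf.differentiable (by rintro rfl; simp at hnm)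
  have heq : uncurry (pdx f) = fun p => fderiv ℝ (uncurry f) p (1, 0) :=
    funext fun p => (hasDerivAt_fderiv_apply_fst (hdiff p)).deriv
  exact heq ▸ (hf.fderiv_right hnm).clm_apply contDiff_const

end PartialDerivatives

theorem hasDerivAt_intervalIntegral_of_continuous {F F' : ℝ → ℝ → ℝ}
    (hF : Continuous (uncurry F)) (hF' : Continuous (uncurry F'))
    (hderiv : ∀ x s, HasDerivAt (F x ·) (F' x s) s) (a b t : ℝ) :
    HasDerivAt (fun s => ∫ x in a..b, F x s) (∫ x in a..b, F' x t) t := by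
  obtain ⟨C, hC⟩ := (isCompact_uIcc.prod (isCompact_closedBall t 1)).exists_bound_of_continuousOn
    hF'.continuousOn
  refine (intervalIntegral.hasDerivAt_integral_of_dominated_loc_of_deriv_le
    (F := fun s x => F x s) (F' := fun s x => F' x s) (bound := fun _ => C)
    (Metric.ball_mem_nhds t one_pos)
    (.of_forall fun s => (hF.uncurry_right s).aestronglyMeasurable)
    ((hF.uncurry_right t).intervalIntegrable a b)
    (hF'.uncurry_right t).aestronglyMeasurable
    (.of_forall fun x hx s hs =>
      hC (x, s) ⟨uIoc_subset_uIcc hx, Metric.ball_subset_closedBall hs⟩)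
    intervalIntegrable_const
    (.of_forall fun x _ s _ => hderiv x s)).2

theorem hasDerivAt_integral_pdt_mul_add_sq {f : ℝ → ℝ → ℝ} (hf : ContDiff ℝ 2 (uncurry f))
    (c d a b t : ℝ) :
    HasDerivAt (fun s => ∫ x in a..b, (c * pdt f x s * f x s + d / 2 * f x s ^ 2))
      (∫ x in a..b, ((c * pdt (pdt f) x t + d * pdt f x t) * f x t + c * pdt f x t ^ 2)) t := by
  have hft : ContDiff ℝ 1 (uncurry (pdt f)) := hf.uncurry_pdt (by norm_num)
  have hftt : Continuous (uncurry (pdt (pdt f))) := (hft.uncurry_pdt (n := 0) le_rfl).continuous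
  have := hf.continuous
  have := hft.continuous
  refine hasDerivAt_intervalIntegral_of_continuous
    (F' := fun x s => (c * pdt (pdt f) x s + d * pdt f x s) * f x s + c * pdt f x s ^ 2)
    (by fun_prop) (by fun_prop) (fun x s => ?_) a b t
  have h0 := hasDerivAt_pdt (hf.differentiable (by norm_num) (x, s))
  have h1 := hasDerivAt_pdt (hft.differentiable (by norm_num) (x, s))
  exact (((h1.const_mul c).mul h0).add ((h0.pow 2).const_mul (d / 2))).congr_deriv
    (by push_cast; ring)

theorem integral_eq_integral_of_eqOn_sub_deriv {a b : ℝ} (hab : a ≤ b) {E T G G' : ℝ → ℝ}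
    (hG : ∀ x ∈ uIcc a b, HasDerivAt G (G' x) x) (hG' : IntervalIntegrable G' volume a b)
    (hE : IntervalIntegrable E volume a b) (hGab : G a = G b) (hT : EqOn T (E - G') (Ioo a b)) :
    ∫ x in a..b, E x = ∫ x in a..b, T x := by
  have hTE : ∫ x in a..b, T x = ∫ x in a..b, (E - G') x := by
    simp only [intervalIntegral.integral_of_le hab, integral_Ioc_eq_integral_Ioo]
    exact setIntegral_congr_fun measurableSet_Ioo hT
  rw [hTE, Pi.sub_def, intervalIntegral.integral_sub hE hG',
    intervalIntegral.integral_eq_sub_of_hasDerivAt hG hG', hGab, sub_self, sub_zero]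

theorem hasDerivAt_I1 {L ρ μ ρ₁ γ : ℝ} {u φ : ℝ → ℝ → ℝ} (hu : ContDiff ℝ 2 (uncurry u))
    (hφ : ContDiff ℝ 2 (uncurry φ)) (t : ℝ) :
    HasDerivAt (I1 L ρ μ ρ₁ γ u φ)
      ((∫ x in (0:ℝ)..L, ((ρ * pdt (pdt u) x t + μ * pdt u x t) * u x t + ρ * pdt u x t ^ 2))
        + ∫ x in (0:ℝ)..L,
          ((ρ₁ * pdt (pdt φ) x t + γ * pdt φ x t) * φ x t + ρ₁ * pdt φ x t ^ 2)) t :=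
  (hasDerivAt_integral_pdt_mul_add_sq hu ρ μ 0 L t).add
    (hasDerivAt_integral_pdt_mul_add_sq hφ ρ₁ γ 0 L t)

def shearFlux (α K b β : ℝ) (u φ ψ w : ℝ → ℝ → ℝ) (x t : ℝ) : ℝ :=
  α * pdx u x t * u x t + K * (pdx φ x t + ψ x t) * φ x t + b * pdx ψ x t * ψ x t
    - β * pdt w x t * φ x t

section ShearFlux

variable {α K b β : ℝ} {u φ ψ w : ℝ → ℝ → ℝ}

theorem contDiff_shearFlux (hu : ContDiff ℝ 2 (uncurry u)) (hφ : ContDiff ℝ 2 (uncurry φ))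
    (hψ : ContDiff ℝ 2 (uncurry ψ)) (hw : ContDiff ℝ 2 (uncurry w)) :
    ContDiff ℝ 1 (uncurry (shearFlux α K b β u φ ψ w)) := by
  have := hu.uncurry_pdx (n := 1) le_rfl
  have := hφ.uncurry_pdx (n := 1) le_rfl
  have := hψ.uncurry_pdx (n := 1) le_rfl
  have := hw.uncurry_pdt (n := 1) le_rfl
  have := hu.of_le (m := 1) (by norm_num)
  have := hφ.of_le (m := 1) (by norm_num)
  have := hψ.of_le (m := 1) (by norm_num)
  unfold shearFlux
  fun_prop

theorem pdx_shearFlux (hu : ContDiff ℝ 2 (uncurry u)) (hφ : ContDiff ℝ 2 (uncurry φ))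
    (hψ : ContDiff ℝ 2 (uncurry ψ)) (hw : ContDiff ℝ 2 (uncurry w)) (x t : ℝ) :
    pdx (shearFlux α K b β u φ ψ w) x t =
      α * (pdx (pdx u) x t * u x t + pdx u x t * pdx u x t)
        + K * (pdx (fun y s => pdx φ y s + ψ y s) x t * φ x t
          + (pdx φ x t + ψ x t) * pdx φ x t)
        + b * (pdx (pdx ψ) x t * ψ x t + pdx ψ x t * pdx ψ x t)
        - β * (pdx (pdt w) x t * φ x t + pdt w x t * pdx φ x t) := by
  have hderiv {f : ℝ → ℝ → ℝ} (hf : ContDiff ℝ 1 (uncurry f)) :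
      HasDerivAt (f · t) (pdx f x t) x :=
    hasDerivAt_pdx (hf.differentiable one_ne_zero (x, t))
  have hψ1 := hψ.of_le (m := 1) (by norm_num)
  have hS := hderiv (f := fun y s => pdx φ y s + ψ y s) ((hφ.uncurry_pdx le_rfl).add hψ1)
  have hφ' := hderiv (hφ.of_le (m := 1) (by norm_num))
  have hu_term :=
    ((hderiv (hu.uncurry_pdx le_rfl)).mul (hderiv (hu.of_le (by norm_num)))).const_mul α
  have hφ_term := (hS.mul hφ').const_mul K
  have hψ_term := ((hderiv (hψ.uncurry_pdx le_rfl)).mul (hderiv hψ1)).const_mul b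
  have hw_term := ((hderiv (hw.uncurry_pdt le_rfl)).mul hφ').const_mul β
  rw [← ((hu_term.add hφ_term).add hψ_term |>.sub hw_term).deriv]
  refine congrArg (deriv · x) (funext fun y => ?_)
  simp only [shearFlux, Pi.add_apply, Pi.sub_apply, Pi.mul_apply]
  ring

end ShearFlux

theorem integral_energy_terms {L ρ α lm ρ₁ K b β t : ℝ} {u φ ψ w : ℝ → ℝ → ℝ}
    (hu : ContDiff ℝ 1 (uncurry u)) (hφ : ContDiff ℝ 1 (uncurry φ))
    (hψ : ContDiff ℝ 1 (uncurry ψ)) (hw : ContDiff ℝ 1 (uncurry w)) :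
    ∫ x in (0:ℝ)..L, (ρ * pdt u x t ^ 2 - α * pdx u x t ^ 2 - lm * (φ x t - u x t) ^ 2
        + ρ₁ * pdt φ x t ^ 2 - K * (pdx φ x t + ψ x t) ^ 2 - b * pdx ψ x t ^ 2
        + β * (pdt w x t * pdx φ x t))
      = ρ * (∫ x in (0:ℝ)..L, (pdt u x t)^2)
          - α * (∫ x in (0:ℝ)..L, (pdx u x t)^2)
          - lm * (∫ x in (0:ℝ)..L, (φ x t - u x t)^2)
          + ρ₁ * (∫ x in (0:ℝ)..L, (pdt φ x t)^2)
          - K * (∫ x in (0:ℝ)..L, (pdx φ x t + ψ x t)^2)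
          - b * (∫ x in (0:ℝ)..L, (pdx ψ x t)^2)
          + β * (∫ x in (0:ℝ)..L, pdt w x t * pdx φ x t) := by
  have := hu.continuous.uncurry_right t
  have := hφ.continuous.uncurry_right t
  have := hψ.continuous.uncurry_right t
  have := (hu.uncurry_pdt (n := 0) le_rfl).continuous.uncurry_right t
  have := (hu.uncurry_pdx (n := 0) le_rfl).continuous.uncurry_right t
  have := (hφ.uncurry_pdt (n := 0) le_rfl).continuous.uncurry_right t
  have := (hφ.uncurry_pdx (n := 0) le_rfl).continuous.uncurry_right t
  have := (hψ.uncurry_pdx (n := 0) le_rfl).continuous.uncurry_right t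
  have := (hw.uncurry_pdt (n := 0) le_rfl).continuous.uncurry_right t
  rw [intervalIntegral.integral_add, intervalIntegral.integral_sub, intervalIntegral.integral_sub,
    intervalIntegral.integral_add, intervalIntegral.integral_sub, intervalIntegral.integral_sub]
  · simp only [intervalIntegral.integral_const_mul]
  all_goals exact Continuous.intervalIntegrable (by fun_prop) _ _

theorem IsShearSolution.integral_deriv_I1_eq {L ρ α lm μ ρ₁ K γ b ρ₃ δ κ β : ℝ}
    {u φ ψ w : ℝ → ℝ → ℝ} (hsol : IsShearSolution L ρ α lm μ ρ₁ K γ b ρ₃ δ κ β u φ ψ w)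
    (hL : 0 ≤ L) {t : ℝ} (ht : 0 < t) :
    (∫ x in (0:ℝ)..L, ((ρ * pdt (pdt u) x t + μ * pdt u x t) * u x t + ρ * pdt u x t ^ 2))
        + (∫ x in (0:ℝ)..L,
          ((ρ₁ * pdt (pdt φ) x t + γ * pdt φ x t) * φ x t + ρ₁ * pdt φ x t ^ 2))
      = ∫ x in (0:ℝ)..L, (ρ * pdt u x t ^ 2 - α * pdx u x t ^ 2 - lm * (φ x t - u x t) ^ 2
        + ρ₁ * pdt φ x t ^ 2 - K * (pdx φ x t + ψ x t) ^ 2 - b * pdx ψ x t ^ 2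
        + β * (pdt w x t * pdx φ x t)) := by
  have hu : ContDiff ℝ 2 (uncurry u) := hsol.smooth_u.of_le (by norm_num)
  have hφ : ContDiff ℝ 2 (uncurry φ) := hsol.smooth_phi.of_le (by norm_num)
  have hψ : ContDiff ℝ 2 (uncurry ψ) := hsol.smooth_psi.of_le (by norm_num)
  have hw : ContDiff ℝ 2 (uncurry w) := hsol.smooth_w.of_le (by norm_num)
  have hut := hu.uncurry_pdt (n := 1) le_rfl
  have hφt := hφ.uncurry_pdt (n := 1) le_rfl
  have := hu.continuous.uncurry_right t
  have := hφ.continuous.uncurry_right t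
  have := hut.continuous.uncurry_right t
  have := hφt.continuous.uncurry_right t
  have := (hut.uncurry_pdt (n := 0) le_rfl).continuous.uncurry_right t
  have := (hφt.uncurry_pdt (n := 0) le_rfl).continuous.uncurry_right t
  have hflux := contDiff_shearFlux (α := α) (K := K) (b := b) (β := β) hu hφ hψ hw
  obtain ⟨hu0, huL, hφ0, hφL, hψ0, hψL, -⟩ := hsol.bc t ht.le
  rw [← intervalIntegral.integral_add (Continuous.intervalIntegrable (by fun_prop) _ _)
    (Continuous.intervalIntegrable (by fun_prop) _ _)]
  refine integral_eq_integral_of_eqOn_sub_deriv hL (G := (shearFlux α K b β u φ ψ w · t))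
    (fun x _ => hasDerivAt_pdx (hflux.differentiable one_ne_zero (x, t)))
    (((hflux.uncurry_pdx (n := 0) le_rfl).continuous.uncurry_right t).intervalIntegrable _ _)
    (Continuous.intervalIntegrable (by fun_prop) _ _)
    (by simp [shearFlux, hu0, huL, hφ0, hφL, hψ0, hψL]) (fun x hx => ?_)
  simp only [Pi.sub_apply]
  rw [pdx_shearFlux hu hφ hψ hw]
  linear_combination -(u x t * hsol.eq1 x hx t ht + φ x t * hsol.eq2 x hx t ht
    + ψ x t * hsol.eq3 x hx t ht)

theorem I1_derivative_identity_general
    {L ρ α lm μ ρ₁ K γ b ρ₃ δ κ β : ℝ}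
    (hL : 0 < L)
    {u φ ψ w : ℝ → ℝ → ℝ}
    (hsol : IsShearSolution L ρ α lm μ ρ₁ K γ b ρ₃ δ κ β u φ ψ w) :
    ∀ t : ℝ, 0 < t →
      HasDerivAt (I1 L ρ μ ρ₁ γ u φ)
        (ρ * (∫ x in (0:ℝ)..L, (pdt u x t)^2)
          - α * (∫ x in (0:ℝ)..L, (pdx u x t)^2)
          - lm * (∫ x in (0:ℝ)..L, (φ x t - u x t)^2)
          + ρ₁ * (∫ x in (0:ℝ)..L, (pdt φ x t)^2)
          - K * (∫ x in (0:ℝ)..L, (pdx φ x t + ψ x t)^2)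
          - b * (∫ x in (0:ℝ)..L, (pdx ψ x t)^2)
          + β * (∫ x in (0:ℝ)..L, pdt w x t * pdx φ x t)) t := by
  intro t ht
  have hu := hsol.smooth_u.of_le (m := 2) (by norm_num)
  have hφ := hsol.smooth_phi.of_le (m := 2) (by norm_num)
  refine (hasDerivAt_I1 hu hφ t).congr_deriv ?_
  rw [hsol.integral_deriv_I1_eq hL.le ht]
  exact integral_energy_terms (hu.of_le (by norm_num)) (hφ.of_le (by norm_num))
    (hsol.smooth_psi.of_le (by norm_num)) (hsol.smooth_w.of_le (by norm_num))

/-- exact derivative identity for the functional I₁. -/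
theorem I1_derivative_identity
    {L ρ α lm μ ρ₁ K γ b ρ₃ δ κ β : ℝ}
    (hL : 0 < L) (hρ : 0 < ρ) (hα : 0 < α) (hlm : 0 < lm) (hμ : 0 < μ)
    (hρ₁ : 0 < ρ₁) (hK : 0 < K) (hγ : 0 < γ) (hb : 0 < b) (hρ₃ : 0 < ρ₃)
    (hδ : 0 < δ) (hκ : 0 < κ) (hβ : β ≠ 0)
    {u φ ψ w : ℝ → ℝ → ℝ}
    (hsol : IsShearSolution L ρ α lm μ ρ₁ K γ b ρ₃ δ κ β u φ ψ w) :
    ∀ t : ℝ, 0 < t →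
      HasDerivAt (I1 L ρ μ ρ₁ γ u φ)
        (ρ * (∫ x in (0:ℝ)..L, (pdt u x t)^2)
          - α * (∫ x in (0:ℝ)..L, (pdx u x t)^2)
          - lm * (∫ x in (0:ℝ)..L, (φ x t - u x t)^2)
          + ρ₁ * (∫ x in (0:ℝ)..L, (pdt φ x t)^2)
          - K * (∫ x in (0:ℝ)..L, (pdx φ x t + ψ x t)^2)
          - b * (∫ x in (0:ℝ)..L, (pdx ψ x t)^2)
          + β * (∫ x in (0:ℝ)..L, pdt w x t * pdx φ x t)) t :=
  I1_derivative_identity_general hL hsol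
end
end

section
/- Let (u, φ, ψ, w) be a classical solution of the suspension-bridge Shear beam system in thermoelasticity of type III, let c_p > 0 be a Poincaré constant for (0,L), and define I₂(t) = ρ₃ ∫₀^L w_t w dx + (κ/2) ∫₀^L w_x² dx + β ∫₀^L φ_x w dx. Then for every t > 0, dI₂(t)/dt ≤ −δ ∫₀^L w_x² dx + (b/4) ∫₀^L ψ_x² dx + (K/4) ∫₀^L (φ_x+ψ)² dx + C₂ ∫₀^L w_{xt}² dx, where C₂ = ρ₃ c_p + β²c_p/K + β²c_p²/b. -/
/-
Differentiate `I₂` under the integral sign. After multiplying equation (iv) by `w` and integrating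
by parts (`w` vanishes at both ends), the `κ`-terms and the `β φ_xt w`-terms cancel, leaving
`I₂' = ∫ ρ₃ w_t² + β φ_x w_t - δ w_x²`. Splitting `φ_x = (φ_x + ψ) - ψ`, Young's inequality with
weights `K/4` and `b/(4 c_p)` and then Poincaré's inequality for `ψ` and `w_t` give the bound.
-/

open MeasureTheory Set

noncomputable section

open Function Filter Topology

section PartialDerivatives

variable {H : ℝ → ℝ → ℝ}

lemma uncurry_pdt (h : Differentiable ℝ (uncurry H)) :
    uncurry (pdt H) = fun p => fderiv ℝ (uncurry H) p (0, 1) := by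
  ext ⟨x, t⟩
  exact ((h (x, t)).hasFDerivAt.comp_hasDerivAt t
    ((hasDerivAt_const t x).prodMk (hasDerivAt_id t))).deriv

lemma uncurry_pdx (h : Differentiable ℝ (uncurry H)) :
    uncurry (pdx H) = fun p => fderiv ℝ (uncurry H) p (1, 0) := by
  ext ⟨x, t⟩
  exact ((h (x, t)).hasFDerivAt.comp_hasDerivAt (f := fun y => (y, t)) x
    ((hasDerivAt_id x).prodMk (hasDerivAt_const x t))).deriv

lemma hasDerivAt_pdt_s7 (h : Differentiable ℝ (uncurry H)) (x t : ℝ) :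
    HasDerivAt (H x) (pdt H x t) t :=
  ((h (x, t)).comp t ((differentiableAt_const x).prodMk differentiableAt_id)).hasDerivAt

lemma hasDerivAt_pdx_s7 (h : Differentiable ℝ (uncurry H)) (x t : ℝ) :
    HasDerivAt (H · t) (pdx H x t) x :=
  ((h (x, t)).comp (f := fun y => (y, t)) x
    (differentiableAt_id.prodMk (differentiableAt_const t))).hasDerivAt

lemma contDiff_uncurry_pdt {m n : WithTop ℕ∞} (h : ContDiff ℝ n (uncurry H))
    (hmn : m + 1 ≤ n) : ContDiff ℝ m (uncurry (pdt H)) := by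
  rw [uncurry_pdt (h.differentiable (zero_lt_one.trans_le (le_add_self.trans hmn)).ne')]
  exact (h.fderiv_right hmn).clm_apply contDiff_const

lemma contDiff_uncurry_pdx {m n : WithTop ℕ∞} (h : ContDiff ℝ n (uncurry H))
    (hmn : m + 1 ≤ n) : ContDiff ℝ m (uncurry (pdx H)) := by
  rw [uncurry_pdx (h.differentiable (zero_lt_one.trans_le (le_add_self.trans hmn)).ne')]
  exact (h.fderiv_right hmn).clm_apply contDiff_const

lemma pdt_pdx (h : ContDiff ℝ 2 (uncurry H)) : pdt (pdx H) = pdx (pdt H) := by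
  have hd : Differentiable ℝ (uncurry H) := h.differentiable two_ne_zero
  have hd' : Differentiable ℝ (fderiv ℝ (uncurry H)) :=
    (h.fderiv_right (m := 1) (by norm_num)).differentiable one_ne_zero
  have hdx : Differentiable ℝ (uncurry (pdx H)) :=
    (contDiff_uncurry_pdx (m := 1) h (by norm_num)).differentiable one_ne_zero
  have hdt : Differentiable ℝ (uncurry (pdt H)) :=
    (contDiff_uncurry_pdt (m := 1) h (by norm_num)).differentiable one_ne_zero
  ext x t
  change uncurry (pdt (pdx H)) (x, t) = uncurry (pdx (pdt H)) (x, t)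
  rw [uncurry_pdt hdx, uncurry_pdx hdt, uncurry_pdx hd, uncurry_pdt hd]
  beta_reduce
  rw [fderiv_clm_apply (hd' _) (differentiableAt_const _),
    fderiv_clm_apply (hd' _) (differentiableAt_const _)]
  simpa using (h.contDiffAt.isSymmSndFDerivAt (by simp)) (0, 1) (1, 0)

lemma pdt_eq_zero_of_eventually {x t : ℝ} (h : ∀ᶠ s in 𝓝 t, H x s = 0) : pdt H x t = 0 := by
  rw [pdt, EventuallyEq.deriv_eq (f := fun _ => 0) h, deriv_const]

end PartialDerivatives

lemma hasDerivAt_intervalIntegral_of_contDiff {G : ℝ → ℝ → ℝ} (hG : ContDiff ℝ 1 (uncurry G))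
    (a b t : ℝ) : HasDerivAt (fun τ => ∫ x in a..b, G x τ) (∫ x in a..b, pdt G x t) t := by
  have hG' : Continuous (uncurry (pdt G)) :=
    (contDiff_uncurry_pdt (m := 0) hG (by norm_num)).continuous
  obtain ⟨C, hC⟩ := (isCompact_uIcc.prod (isCompact_closedBall t 1)).exists_bound_of_continuousOn
    hG'.continuousOn
  refine (intervalIntegral.hasDerivAt_integral_of_dominated_loc_of_deriv_le (F := fun τ x => G x τ)
    (F' := fun τ x => pdt G x τ) (bound := fun _ => C)
    (Metric.closedBall_mem_nhds t one_pos) ?_ ?_ ?_ ?_ intervalIntegrable_const ?_).2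
  · exact .of_forall fun s => (hG.continuous.uncurry_right s).aestronglyMeasurable
  · exact (hG.continuous.uncurry_right t).intervalIntegrable _ _
  · exact (hG'.uncurry_right t).aestronglyMeasurable
  · exact .of_forall fun x hx s hs => hC (x, s) ⟨uIoc_subset_uIcc hx, hs⟩
  · exact .of_forall fun x _ s _ => hasDerivAt_pdt_s7 (hG.differentiable one_ne_zero) x s

lemma integral_eq_integral_of_hasDerivAt_sub {a b : ℝ} (hab : a ≤ b) {F f g : ℝ → ℝ}
    (hF : ContinuousOn F (Icc a b)) (hFab : F a = F b)
    (hderiv : ∀ x ∈ Ioo a b, HasDerivAt F (f x - g x) x)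
    (hf : IntervalIntegrable f volume a b) (hg : IntervalIntegrable g volume a b) :
    ∫ x in a..b, f x = ∫ x in a..b, g x := by
  have h := intervalIntegral.integral_eq_sub_of_hasDerivAt_of_le hab hF hderiv (hf.sub hg)
  rwa [intervalIntegral.integral_sub hf hg, hFab, sub_self, sub_eq_zero] at h

lemma mul_le_young {ε : ℝ} (hε : 0 < ε) (c a b : ℝ) :
    c * (a * b) ≤ ε * a ^ 2 + c ^ 2 / (4 * ε) * b ^ 2 := by
  have hsq : ε * a ^ 2 + c ^ 2 / (4 * ε) * b ^ 2 - c * (a * b)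
      = (2 * ε * a - c * b) ^ 2 / (4 * ε) := by
    field_simp
    ring
  have : 0 ≤ (2 * ε * a - c * b) ^ 2 / (4 * ε) := by positivity
  linarith

lemma mul_mul_le_young_split {K b c : ℝ} (hK : 0 < K) (hb : 0 < b) (hc : 0 < c) (β p s q : ℝ) :
    β * (p * q)
      ≤ K / 4 * (p + s) ^ 2 + b / (4 * c) * s ^ 2 + (β ^ 2 / K + β ^ 2 * c / b) * q ^ 2 := by
  have h₁ := mul_le_young (ε := K / 4) (by positivity) β (p + s) q
  have h₂ := mul_le_young (ε := b / (4 * c)) (by positivity) (-β) s q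
  have e₁ : β ^ 2 / (4 * (K / 4)) = β ^ 2 / K := by ring
  have e₂ : (-β) ^ 2 / (4 * (b / (4 * c))) = β ^ 2 * c / b := by field_simp
  rw [e₁] at h₁
  rw [e₂] at h₂
  linarith

lemma integral_mul_le_young_split {L K b c : ℝ} (hL : 0 ≤ L) (hK : 0 < K) (hb : 0 < b)
    (hc : 0 < c) (ρ₃ β δ : ℝ) {p s q r : ℝ → ℝ} (hp : Continuous p) (hs : Continuous s)
    (hq : Continuous q) (hr : Continuous r) :
    ∫ x in (0:ℝ)..L, (ρ₃ * q x ^ 2 + β * (p x * q x) - δ * r x ^ 2)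
      ≤ K / 4 * (∫ x in (0:ℝ)..L, (p x + s x) ^ 2) + b / (4 * c) * (∫ x in (0:ℝ)..L, s x ^ 2)
        + (ρ₃ + β ^ 2 / K + β ^ 2 * c / b) * (∫ x in (0:ℝ)..L, q x ^ 2)
        - δ * ∫ x in (0:ℝ)..L, r x ^ 2 := by
  set C := ρ₃ + β ^ 2 / K + β ^ 2 * c / b
  calc ∫ x in (0:ℝ)..L, (ρ₃ * q x ^ 2 + β * (p x * q x) - δ * r x ^ 2)
      ≤ ∫ x in (0:ℝ)..L,
          (K / 4 * (p x + s x) ^ 2 + b / (4 * c) * s x ^ 2 + C * q x ^ 2 - δ * r x ^ 2) :=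
        intervalIntegral.integral_mono_on hL (Continuous.intervalIntegrable (by fun_prop) _ _)
          (Continuous.intervalIntegrable (by fun_prop) _ _) fun x _ => by
            linarith [mul_mul_le_young_split hK hb hc β (p x) (s x) (q x)]
    _ = _ := by
        rw [intervalIntegral.integral_sub, intervalIntegral.integral_add,
          intervalIntegral.integral_add]
        · simp only [intervalIntegral.integral_const_mul]
        all_goals exact Continuous.intervalIntegrable (by fun_prop) _ _

def I2Density (ρ₃ κ β : ℝ) (φ w : ℝ → ℝ → ℝ) (x τ : ℝ) : ℝ :=
  ρ₃ * (pdt w x τ * w x τ) + κ / 2 * pdx w x τ ^ 2 + β * (pdx φ x τ * w x τ)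

section I2Density

variable {ρ₃ κ β : ℝ} {φ w : ℝ → ℝ → ℝ}

lemma I2_eq_integral_I2Density (hw : ContDiff ℝ 1 (uncurry w)) (hφ : ContDiff ℝ 1 (uncurry φ))
    (L : ℝ) : I2 L ρ₃ κ β φ w = fun τ => ∫ x in (0:ℝ)..L, I2Density ρ₃ κ β φ w x τ := by
  have hwt : Continuous (uncurry (pdt w)) :=
    (contDiff_uncurry_pdt (m := 0) hw (by norm_num)).continuous
  have hwx : Continuous (uncurry (pdx w)) :=
    (contDiff_uncurry_pdx (m := 0) hw (by norm_num)).continuous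
  have hφx : Continuous (uncurry (pdx φ)) :=
    (contDiff_uncurry_pdx (m := 0) hφ (by norm_num)).continuous
  ext τ
  simp only [I2, I2Density]
  rw [intervalIntegral.integral_add, intervalIntegral.integral_add,
    intervalIntegral.integral_const_mul, intervalIntegral.integral_const_mul,
    intervalIntegral.integral_const_mul] <;>
  exact Continuous.intervalIntegrable (by fun_prop) _ _

lemma contDiff_uncurry_I2Density (hw : ContDiff ℝ 2 (uncurry w)) (hφ : ContDiff ℝ 2 (uncurry φ)) :
    ContDiff ℝ 1 (uncurry (I2Density ρ₃ κ β φ w)) := by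
  have hwt : ContDiff ℝ 1 (uncurry (pdt w)) := contDiff_uncurry_pdt hw (by norm_num)
  have hwx : ContDiff ℝ 1 (uncurry (pdx w)) := contDiff_uncurry_pdx hw (by norm_num)
  have hφx : ContDiff ℝ 1 (uncurry (pdx φ)) := contDiff_uncurry_pdx hφ (by norm_num)
  simp only [I2Density, uncurry_def]
  fun_prop (disch := norm_num)

lemma pdt_I2Density (hw : ContDiff ℝ 2 (uncurry w)) (hφ : ContDiff ℝ 2 (uncurry φ)) (x t : ℝ) :
    pdt (I2Density ρ₃ κ β φ w) x t = ρ₃ * (pdt (pdt w) x t * w x t + pdt w x t ^ 2)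
      + κ * (pdx w x t * pdx (pdt w) x t)
      + β * (pdx (pdt φ) x t * w x t + pdx φ x t * pdt w x t) := by
  have hw' := hasDerivAt_pdt_s7 (hw.differentiable two_ne_zero) x t
  have hwt' := hasDerivAt_pdt_s7
    ((contDiff_uncurry_pdt (m := 1) hw (by norm_num)).differentiable one_ne_zero) x t
  have hwx' := hasDerivAt_pdt_s7
    ((contDiff_uncurry_pdx (m := 1) hw (by norm_num)).differentiable one_ne_zero) x t
  have hφx' := hasDerivAt_pdt_s7
    ((contDiff_uncurry_pdx (m := 1) hφ (by norm_num)).differentiable one_ne_zero) x t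
  have h := (((hwt'.mul hw').const_mul ρ₃).add ((hwx'.pow 2).const_mul (κ / 2))).add
    ((hφx'.mul hw').const_mul β)
  rw [show pdt (I2Density ρ₃ κ β φ w) x t = _ from h.deriv, pdt_pdx hw, pdt_pdx hφ]
  ring

end I2Density

namespace IsShearSolution

variable {L ρ α lm μ ρ₁ K γ b ρ₃ δ κ β : ℝ} {u φ ψ w : ℝ → ℝ → ℝ}

lemma pdt_w_boundary (hsol : IsShearSolution L ρ α lm μ ρ₁ K γ b ρ₃ δ κ β u φ ψ w) {t : ℝ}
    (ht : 0 < t) : pdt w 0 t = 0 ∧ pdt w L t = 0 := by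
  have hbc : ∀ᶠ s in 𝓝 t, w 0 s = 0 ∧ w L s = 0 :=
    eventually_of_mem (Ioi_mem_nhds ht) fun s hs => (hsol.bc s hs.le).2.2.2.2.2.2
  exact ⟨pdt_eq_zero_of_eventually (hbc.mono fun _ h => h.1),
    pdt_eq_zero_of_eventually (hbc.mono fun _ h => h.2)⟩

lemma integral_pdt_I2Density (hsol : IsShearSolution L ρ α lm μ ρ₁ K γ b ρ₃ δ κ β u φ ψ w)
    (hL : 0 ≤ L) {t : ℝ} (ht : 0 < t) :
    ∫ x in (0:ℝ)..L, pdt (I2Density ρ₃ κ β φ w) x t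
      = ∫ x in (0:ℝ)..L,
          (ρ₃ * pdt w x t ^ 2 + β * (pdx φ x t * pdt w x t) - δ * pdx w x t ^ 2) := by
  have w3 : ContDiff ℝ 3 (uncurry w) := hsol.smooth_w
  have φ3 : ContDiff ℝ 3 (uncurry φ) := hsol.smooth_phi
  have wt : ContDiff ℝ 2 (uncurry (pdt w)) := contDiff_uncurry_pdt w3 (by norm_num)
  have wx : ContDiff ℝ 2 (uncurry (pdx w)) := contDiff_uncurry_pdx w3 (by norm_num)
  have φx : ContDiff ℝ 2 (uncurry (pdx φ)) := contDiff_uncurry_pdx φ3 (by norm_num)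
  have φt : ContDiff ℝ 2 (uncurry (pdt φ)) := contDiff_uncurry_pdt φ3 (by norm_num)
  have wtt : ContDiff ℝ 1 (uncurry (pdt (pdt w))) := contDiff_uncurry_pdt wt (by norm_num)
  have wxt : ContDiff ℝ 1 (uncurry (pdx (pdt w))) := contDiff_uncurry_pdx wt (by norm_num)
  have wxx : ContDiff ℝ 1 (uncurry (pdx (pdx w))) := contDiff_uncurry_pdx wx (by norm_num)
  have φxt : ContDiff ℝ 1 (uncurry (pdx (pdt φ))) := contDiff_uncurry_pdx φt (by norm_num)
  have wxxt : Continuous (uncurry (pdx (pdx (pdt w)))) :=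
    (contDiff_uncurry_pdx (m := 0) wxt (by norm_num)).continuous
  obtain ⟨-, -, -, -, -, -, hw0, hwL⟩ := hsol.bc t ht.le
  simp only [pdt_I2Density (w3.of_le (by norm_num)) (φ3.of_le (by norm_num))]
  -- `F` is the boundary term of the integration by parts of `w · (δ w_xx + κ w_xxt)`.
  refine integral_eq_integral_of_hasDerivAt_sub hL
    (F := fun x => (δ * pdx w x t + κ * pdx (pdt w) x t) * w x t)
    (Continuous.continuousOn (by fun_prop)) (by simp [hw0, hwL]) (fun x hx => ?_)
    (Continuous.intervalIntegrable (by fun_prop (disch := norm_num)) _ _)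
    (Continuous.intervalIntegrable (by fun_prop (disch := norm_num)) _ _)
  refine ((((hasDerivAt_pdx_s7 (wx.differentiable (by norm_num)) x t).const_mul δ).add
    ((hasDerivAt_pdx_s7 (wxt.differentiable (by norm_num)) x t).const_mul κ)).mul
    (hasDerivAt_pdx_s7 (w3.differentiable (by norm_num)) x t)).congr_deriv ?_
  simp only [Pi.add_apply]
  linear_combination -w x t * hsol.eq4 x hx t ht

lemma hasDerivAt_I2 (hsol : IsShearSolution L ρ α lm μ ρ₁ K γ b ρ₃ δ κ β u φ ψ w) (hL : 0 ≤ L)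
    {t : ℝ} (ht : 0 < t) :
    HasDerivAt (I2 L ρ₃ κ β φ w)
      (∫ x in (0:ℝ)..L, (ρ₃ * pdt w x t ^ 2 + β * (pdx φ x t * pdt w x t) - δ * pdx w x t ^ 2))
      t := by
  have hw : ContDiff ℝ 2 (uncurry w) := hsol.smooth_w.of_le (by norm_num)
  have hφ : ContDiff ℝ 2 (uncurry φ) := hsol.smooth_phi.of_le (by norm_num)
  rw [I2_eq_integral_I2Density (hw.of_le one_le_two) (hφ.of_le one_le_two),
    ← hsol.integral_pdt_I2Density hL ht]
  exact hasDerivAt_intervalIntegral_of_contDiff (contDiff_uncurry_I2Density hw hφ) 0 L t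

end IsShearSolution

theorem I2_derivative_estimate_general
    {L ρ α lm μ ρ₁ K γ b ρ₃ δ κ β c_p : ℝ}
    (hL : 0 < L)
    (hK : 0 < K) (hb : 0 < b) (hρ₃ : 0 < ρ₃)
    (hcp : 0 < c_p)
    (hpoin : ∀ f : ℝ → ℝ, ContDiff ℝ 1 f → f 0 = 0 → f L = 0 →
      (∫ x in (0:ℝ)..L, (f x)^2) ≤ c_p * ∫ x in (0:ℝ)..L, (deriv f x)^2)
    {u φ ψ w : ℝ → ℝ → ℝ}
    (hsol : IsShearSolution L ρ α lm μ ρ₁ K γ b ρ₃ δ κ β u φ ψ w) :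
    ∀ t : ℝ, 0 < t →
      ∃ d : ℝ, HasDerivAt (I2 L ρ₃ κ β φ w) d t ∧
        d ≤ -(δ * ∫ x in (0:ℝ)..L, (pdx w x t)^2)
          + b / 4 * (∫ x in (0:ℝ)..L, (pdx ψ x t)^2)
          + K / 4 * (∫ x in (0:ℝ)..L, (pdx φ x t + ψ x t)^2)
          + (ρ₃ * c_p + β^2 * c_p / K + β^2 * c_p^2 / b)
              * (∫ x in (0:ℝ)..L, (pdx (pdt w) x t)^2) := by
  intro t ht
  refine ⟨_, hsol.hasDerivAt_I2 hL.le ht, ?_⟩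
  have hψ : ContDiff ℝ 1 (uncurry ψ) := hsol.smooth_psi.of_le (by norm_num)
  have hwt : ContDiff ℝ 1 (uncurry (pdt w)) := contDiff_uncurry_pdt hsol.smooth_w (by norm_num)
  have hwx : ContDiff ℝ 1 (uncurry (pdx w)) := contDiff_uncurry_pdx hsol.smooth_w (by norm_num)
  have hφx : ContDiff ℝ 1 (uncurry (pdx φ)) := contDiff_uncurry_pdx hsol.smooth_phi (by norm_num)
  obtain ⟨-, -, -, -, hψ0, hψL, -, -⟩ := hsol.bc t ht.le
  obtain ⟨hwt0, hwtL⟩ := hsol.pdt_w_boundary ht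
  have hpoin_ψ : ∫ x in (0:ℝ)..L, ψ x t ^ 2 ≤ c_p * ∫ x in (0:ℝ)..L, pdx ψ x t ^ 2 :=
    hpoin (ψ · t) (by fun_prop) hψ0 hψL
  have hpoin_wt : ∫ x in (0:ℝ)..L, pdt w x t ^ 2 ≤ c_p * ∫ x in (0:ℝ)..L, pdx (pdt w) x t ^ 2 :=
    hpoin (pdt w · t) (by fun_prop) hwt0 hwtL
  calc ∫ x in (0:ℝ)..L, (ρ₃ * pdt w x t ^ 2 + β * (pdx φ x t * pdt w x t) - δ * pdx w x t ^ 2)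
      ≤ K / 4 * (∫ x in (0:ℝ)..L, (pdx φ x t + ψ x t) ^ 2)
          + b / (4 * c_p) * (∫ x in (0:ℝ)..L, ψ x t ^ 2)
          + (ρ₃ + β ^ 2 / K + β ^ 2 * c_p / b) * (∫ x in (0:ℝ)..L, pdt w x t ^ 2)
          - δ * ∫ x in (0:ℝ)..L, pdx w x t ^ 2 :=
        integral_mul_le_young_split hL.le hK hb hcp ρ₃ β δ (by fun_prop) (by fun_prop)
          (by fun_prop) (by fun_prop)
    _ ≤ K / 4 * (∫ x in (0:ℝ)..L, (pdx φ x t + ψ x t) ^ 2)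
          + b / (4 * c_p) * (c_p * ∫ x in (0:ℝ)..L, pdx ψ x t ^ 2)
          + (ρ₃ + β ^ 2 / K + β ^ 2 * c_p / b) * (c_p * ∫ x in (0:ℝ)..L, pdx (pdt w) x t ^ 2)
          - δ * ∫ x in (0:ℝ)..L, pdx w x t ^ 2 := by
        gcongr
    _ = _ := by
        field_simp
        ring

/-- derivative estimate for the functional I₂. -/
theorem I2_derivative_estimate
    {L ρ α lm μ ρ₁ K γ b ρ₃ δ κ β c_p : ℝ}
    (hL : 0 < L) (hρ : 0 < ρ) (hα : 0 < α) (hlm : 0 < lm) (hμ : 0 < μ)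
    (hρ₁ : 0 < ρ₁) (hK : 0 < K) (hγ : 0 < γ) (hb : 0 < b) (hρ₃ : 0 < ρ₃)
    (hδ : 0 < δ) (hκ : 0 < κ) (hβ : β ≠ 0) (hcp : 0 < c_p)
    (hpoin : ∀ f : ℝ → ℝ, ContDiff ℝ 1 f → f 0 = 0 → f L = 0 →
      (∫ x in (0:ℝ)..L, (f x)^2) ≤ c_p * ∫ x in (0:ℝ)..L, (deriv f x)^2)
    {u φ ψ w : ℝ → ℝ → ℝ}
    (hsol : IsShearSolution L ρ α lm μ ρ₁ K γ b ρ₃ δ κ β u φ ψ w) :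
    ∀ t : ℝ, 0 < t →
      ∃ d : ℝ, HasDerivAt (I2 L ρ₃ κ β φ w) d t ∧
        d ≤ -(δ * ∫ x in (0:ℝ)..L, (pdx w x t)^2)
          + b / 4 * (∫ x in (0:ℝ)..L, (pdx ψ x t)^2)
          + K / 4 * (∫ x in (0:ℝ)..L, (pdx φ x t + ψ x t)^2)
          + (ρ₃ * c_p + β^2 * c_p / K + β^2 * c_p^2 / b)
              * (∫ x in (0:ℝ)..L, (pdx (pdt w) x t)^2) :=
  I2_derivative_estimate_general hL hK hb hρ₃ hcp hpoin hsol
end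
end
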